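/- arXiv:2003.11019 — 2 statements merged into one kernel-verified Lean document; each statement's English description precedes it below -/
import Mathlib

section
/- The Ricci tensor of the 3-dimensional example, defined by ρ(y, z) = trace of the linear map x ↦ R(x, y)z where R(x, y)z = ∇ₓ∇_y z - ∇_y∇ₓ z - ∇_{[x,y]} z, equals 2η⊗η (i.e. ρ(y, z) = 2η(y)η(z) for all y, z ∈ 𝔤), and the scalar curvature τ = ρ(e₁,e₁) - ρ(e₂,e₂) + ρ(e₃,e₃) equals 2. -/
noncomputable section

/-- The underlying 3-dimensional real vector space. -/
abbrev V3 := Fin 3 → ℝ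

/-- The basis `(e₁, e₂, e₃)` (standard basis of `ℝ³`). -/
def e3 (i : Fin 3) : V3 := Pi.single i 1

/-- The Lie bracket: the bilinear extension of
`[e₃, e₁] = e₂`, `[e₃, e₂] = -e₁`, `[e₁, e₂] = 0`. -/
def br3 (x y : V3) : V3 :=
  ![x 1 * y 2 - x 2 * y 1, x 2 * y 0 - x 0 * y 2, 0]

/-- The B-metric `g`: `g(e₁,e₁) = 1`, `g(e₂,e₂) = -1`, `g(e₃,e₃) = 1`,
`g(eᵢ,eⱼ) = 0` for `i ≠ j`. -/
def gM3 (x y : V3) : ℝ := x 0 * y 0 - x 1 * y 1 + x 2 * y 2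

/-- The structure endomorphism `φ`: `φe₁ = e₂`, `φe₂ = -e₁`, `φe₃ = 0`. -/
def phi3 (x : V3) : V3 := ![-(x 1), x 0, 0]

/-- The Reeb vector field `ξ = e₃`. -/
def xi3 : V3 := e3 2

/-- The contact form `η`: `η(e₁) = η(e₂) = 0`, `η(e₃) = 1`. -/
def eta3 (x : V3) : ℝ := x 2

/-- The Koszul formula for the Levi-Civita connection of a left-invariant metric. -/
def Koszul3 (nabla : V3 → V3 → V3) : Prop :=
  ∀ x y z : V3,
    2 * gM3 (nabla x y) z = gM3 (br3 x y) z - gM3 (br3 y z) x + gM3 (br3 z x) y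

/-- The curvature tensor `R(x,y)z = ∇ₓ∇_y z - ∇_y ∇ₓ z - ∇_{[x,y]} z`. -/
def R3 (nabla : V3 → V3 → V3) (x y z : V3) : V3 :=
  nabla x (nabla y z) - nabla y (nabla x z) - nabla (br3 x y) z

/-- The Ricci tensor `ρ(y,z)`: the trace of the map `x ↦ R(x,y)z`,
computed in the standard basis. -/
def ric3 (nabla : V3 → V3 → V3) (y z : V3) : ℝ :=
  ∑ i : Fin 3, R3 nabla (e3 i) y z i

/-! Since `g` is nondegenerate, the Koszul formula has exactly one solution,
`∇ₓy = x₂y₃ e₁ - x₁y₃ e₂ - (x₁y₂ + x₂y₁) e₃`. Its curvature is computed componentwise,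
and in the trace of `x ↦ R(x,y)z` everything cancels except `2 y₃ z₃`. -/

def nabla3 (x y : V3) : V3 :=
  ![x 1 * y 2, -(x 0 * y 2), -(x 0 * y 1 + x 1 * y 0)]

lemma eq_of_forall_gM3_eq {u v : V3} (h : ∀ z, gM3 u z = gM3 v z) : u = v := by
  funext i
  fin_cases i
  · simpa [gM3, e3] using h (e3 0)
  · simpa [gM3, e3] using h (e3 1)
  · simpa [gM3, e3] using h (e3 2)

lemma koszul3_nabla3 : Koszul3 nabla3 := by
  intro x y z
  simp only [gM3, nabla3, br3, Matrix.cons_val_zero, Matrix.cons_val_one, Matrix.cons_val_two,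
    Matrix.head_cons, Matrix.tail_cons]
  ring

theorem Koszul3.eq_nabla3 {nabla : V3 → V3 → V3} (hK : Koszul3 nabla) : nabla = nabla3 := by
  funext x y
  refine eq_of_forall_gM3_eq fun z => ?_
  linarith [hK x y z, koszul3_nabla3 x y z]

lemma R3_nabla3 (x y z : V3) :
    R3 nabla3 x y z =
      ![(x 0 * y 1 - x 1 * y 0) * z 1 + (x 0 * y 2 - x 2 * y 0) * z 2,
        (x 0 * y 1 - x 1 * y 0) * z 0 + (x 1 * y 2 - x 2 * y 1) * z 2,
        (x 2 * y 0 - x 0 * y 2) * z 0 + (x 1 * y 2 - x 2 * y 1) * z 1] := by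
  funext i
  fin_cases i <;>
    simp only [R3, nabla3, br3, Pi.sub_apply, Matrix.cons_val_zero, Matrix.cons_val_one,
      Matrix.cons_val_two, Matrix.head_cons, Matrix.tail_cons, Fin.zero_eta, Fin.mk_one,
      Fin.reduceFinMk] <;>
    ring

lemma ric3_nabla3 (y z : V3) : ric3 nabla3 y z = 2 * eta3 y * eta3 z := by
  simp only [ric3, R3_nabla3, Fin.sum_univ_three, eta3, e3, Pi.single_apply,
    Matrix.cons_val_zero, Matrix.cons_val_one, Matrix.cons_val_two, Matrix.head_cons,
    Matrix.tail_cons, if_pos, Fin.reduceEq, if_false]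
  ring

/-- The Ricci tensor of the 3-dimensional example equals `2 η⊗η`, and the scalar
curvature `τ = ρ(e₁,e₁) - ρ(e₂,e₂) + ρ(e₃,e₃)` equals `2`. -/
theorem ricci_3dim (nabla : V3 → V3 → V3) (hK : Koszul3 nabla) :
    (∀ y z : V3, ric3 nabla y z = 2 * eta3 y * eta3 z) ∧
    ric3 nabla (e3 0) (e3 0) - ric3 nabla (e3 1) (e3 1) + ric3 nabla (e3 2) (e3 2) = 2 := by
  obtain rfl := hK.eq_nabla3
  refine ⟨ric3_nabla3, ?_⟩
  simp [ric3_nabla3, eta3, e3]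
end
end

section
/- In the 3-dimensional example, the sectional curvature k(x, y) = R(x,y,y,x) / (g(x,x)g(y,y) - g(x,y)²), where R(x,y,z,w) = g(∇ₓ∇_y z - ∇_y∇ₓ z - ∇_{[x,y]} z, w), takes the value -1 on the φ-holomorphic section spanned by {e₁, e₂} and the value +1 on the ξ-sections spanned by {e₁, e₃} and by {e₂, e₃}. -/
noncomputable section

/-- The sectional curvature `k(x,y) = R(x,y,y,x)/(g(x,x)g(y,y) - g(x,y)²)`
of the 3-dimensional example. -/
def sec3 (nabla : V3 → V3 → V3) (x y : V3) : ℝ :=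
  gM3 (R3 nabla x y y) x / (gM3 x x * gM3 y y - (gM3 x y) ^ 2)

/-! Since `g` is nondegenerate, the Koszul formula pins down `∇` completely: in coordinates
`∇ₓy = (x₂y₃, -x₁y₃, -(x₁y₂ + x₂y₁))` (indices `0, 1, 2` in Lean), and the three
sectional curvatures are then a direct computation. -/

@[simp]
theorem e3_zero : e3 0 = ![1, 0, 0] := by
  ext j; fin_cases j <;> simp [e3]

@[simp]
theorem e3_one : e3 1 = ![0, 1, 0] := by
  ext j; fin_cases j <;> simp [e3]

@[simp]
theorem e3_two : e3 2 = ![0, 0, 1] := by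
  ext j; fin_cases j <;> simp [e3]

def leviCivita3 (x y : V3) : V3 :=
  ![x 1 * y 2, -(x 0 * y 2), -(x 0 * y 1 + x 1 * y 0)]

theorem gM3_e3_right (v : V3) (i : Fin 3) : gM3 v (e3 i) = if i = 1 then -v i else v i := by
  fin_cases i <;> simp [gM3]

theorem eq_of_forall_gM3_e3_eq {u v : V3} (h : ∀ i, gM3 u (e3 i) = gM3 v (e3 i)) : u = v := by
  funext i
  have hi := h i
  simp only [gM3_e3_right] at hi
  split_ifs at hi <;> linarith

theorem Koszul3.eq_leviCivita3 {nabla : V3 → V3 → V3} (hK : Koszul3 nabla) :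
    nabla = leviCivita3 := by
  funext x y
  refine eq_of_forall_gM3_e3_eq fun i => ?_
  have hsol : gM3 (br3 x y) (e3 i) - gM3 (br3 y (e3 i)) x + gM3 (br3 (e3 i) x) y =
      2 * gM3 (leviCivita3 x y) (e3 i) := by
    fin_cases i <;> simp [gM3, br3, leviCivita3] <;> ring
  linarith [hK x y (e3 i)]

theorem sec3_leviCivita3_e0_e1 : sec3 leviCivita3 (e3 0) (e3 1) = -1 := by
  simp [sec3, R3, leviCivita3, br3, gM3, Matrix.cons_val]

theorem sec3_leviCivita3_e0_e2 : sec3 leviCivita3 (e3 0) (e3 2) = 1 := by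
  simp [sec3, R3, leviCivita3, br3, gM3, Matrix.cons_val]

theorem sec3_leviCivita3_e1_e2 : sec3 leviCivita3 (e3 1) (e3 2) = 1 := by
  simp [sec3, R3, leviCivita3, br3, gM3, Matrix.cons_val]

/-- In the 3-dimensional example, the sectional curvature is `-1` on the φ-holomorphic
section `span{e₁, e₂}` and `+1` on the ξ-sections `span{e₁, e₃}` and `span{e₂, e₃}`. -/
theorem sectional_curvatures_3dim (nabla : V3 → V3 → V3) (hK : Koszul3 nabla) :
    sec3 nabla (e3 0) (e3 1) = -1 ∧
    sec3 nabla (e3 0) (e3 2) = 1 ∧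
    sec3 nabla (e3 1) (e3 2) = 1 := by
  rw [hK.eq_leviCivita3]
  exact ⟨sec3_leviCivita3_e0_e1, sec3_leviCivita3_e0_e2, sec3_leviCivita3_e1_e2⟩
end
end
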